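/- Let p, λ, t ∈ (0,∞). Then there exists a constant C > 0 (depending only on p, λ, t) such that for every entire function f : ℂ → ℂ and every z ∈ ℂ, |f(z) e^{-(λ/2)|z|²}|^p ≤ C ∫_{B(z,t)} |f(w) e^{-(λ/2)|w|²}|^p dA(w). -/

import Mathlib

open MeasureTheory Metric Real Set

/-!
Since `‖g‖ ^ p = ‖g ^ n‖ ^ (p / n)`, it suffices to bound `‖g z‖ ^ p` by the integral of `‖g‖ ^ p`
over `B(z, t)` for holomorphic `g` and `0 < p ≤ 1`. Let `ζ` maximise the weighted modulus
`‖g w‖ (t - |w - z|) ^ (2 / p)` on the closed disc and `r = (t - |ζ - z|) / 2`. On `B(ζ, r)` the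
weight is at least `r ^ (2 / p)`, so `‖g‖ ≤ 2 ^ (2 / p) ‖g ζ‖` there, and the area mean value
inequality for `‖g‖` combined with `‖g‖ ≤ ‖g‖ ^ p (2 ^ (2 / p) ‖g ζ‖) ^ (1 - p)` bounds
`r ^ 2 ‖g ζ‖ ^ p` by the integral. Raised to the power `p`, the weight `(2r) ^ (2 / p)` at `ζ`
becomes `4 r ^ 2`, and maximality at `ζ` gives `t ^ 2 ‖g z‖ ^ p ≤ 4 r ^ 2 ‖g ζ‖ ^ p`.

For the Gaussian weight apply this to `h w = f w exp (-λ z̄ w)`: then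
`‖h w‖ exp (λ|z|²/2) = ‖f w‖ exp (-λ|w|²/2) exp (λ|w - z|²/2)`, and the last factor is `1` at `z`
and at most `exp (λt²/2)` on `B(z, t)`.
-/

section CircleAverage

variable {E : Type*} [NormedAddCommGroup E] [NormedSpace ℝ E]

theorem circleMap_eq_add_polarCoord_symm (c : ℂ) (r θ : ℝ) :
    circleMap c r θ = c + Complex.polarCoord.symm (r, θ) := by
  simp [circleMap, Complex.polarCoord_symm_apply, Complex.exp_mul_I]

theorem setIntegral_ball_eq_setIntegral_ball_zero (f : ℂ → E) (c : ℂ) (t : ℝ) :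
    ∫ w in ball c t, f w = ∫ w in ball 0 t, f (c + w) := by
  rw [← (measurePreserving_add_left volume c).setIntegral_preimage_emb
    (measurableEmbedding_addLeft c)]
  congr 2
  ext w
  simp [dist_eq_norm]

theorem setIntegral_Ioo_circleMap_eq_circleAverage (f : ℂ → E) (c : ℂ) (r : ℝ) :
    ∫ θ in Ioo (-π) π, f (circleMap c r θ) = (2 * π) • circleAverage f c r := by
  rw [circleAverage_eq_integral_add (-π), smul_inv_smul₀ (by positivity),
    intervalIntegral.integral_comp_add_right (fun θ ↦ f (circleMap c r θ)), zero_add,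
    show 2 * π + -π = π by ring, intervalIntegral.integral_of_le (by linarith [pi_pos]),
    integral_Ioc_eq_integral_Ioo]

theorem setIntegral_ball_eq_intervalIntegral_circleAverage {f : ℂ → E} {c : ℂ} {t : ℝ}
    (ht : 0 ≤ t) (hf : ContinuousOn f (closedBall c t)) :
    ∫ w in ball c t, f w = ∫ r in 0..t, (2 * π * r) • circleAverage f c r := by
  set G : ℝ × ℝ → E := fun q ↦ q.1 • f (circleMap c q.1 q.2)
  have hG : IntegrableOn G (Ioo 0 t ×ˢ Ioo (-π) π) (volume.prod volume) := by
    refine (ContinuousOn.integrableOn_compact (isCompact_Icc.prod isCompact_Icc) ?_).mono_set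
      (prod_mono Ioo_subset_Icc_self Ioo_subset_Icc_self)
    refine continuous_fst.continuousOn.smul (hf.comp circleMap.continuous.continuousOn ?_)
    rintro ⟨r, θ⟩ ⟨⟨hr0, hrt⟩, -⟩
    exact closedBall_subset_closedBall hrt (circleMap_mem_closedBall c hr0 θ)
  have hpolar : Ioo 0 t ×ˢ Ioo (-π) π = polarCoord.target ∩ (Iio t ×ˢ univ) := by
    rw [polarCoord_target, prod_inter_prod, Ioi_inter_Iio, inter_univ]
  calc ∫ w in ball c t, f w
      = ∫ q in polarCoord.target,
          q.1 • (ball 0 t).indicator (fun w ↦ f (c + w)) (Complex.polarCoord.symm q) := by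
        rw [Complex.integral_comp_polarCoord_symm, integral_indicator measurableSet_ball,
          setIntegral_ball_eq_setIntegral_ball_zero]
    _ = ∫ q in polarCoord.target, (Iio t ×ˢ univ).indicator G q := by
        refine setIntegral_congr_fun polarCoord.open_target.measurableSet fun q hq ↦ ?_
        have hnorm : ‖Complex.polarCoord.symm q‖ = q.1 := by
          rw [Complex.norm_polarCoord_symm, abs_of_pos hq.1]
        by_cases hqt : q.1 < t
        · rw [indicator_of_mem (by rwa [mem_ball, dist_zero_right, hnorm]),
            indicator_of_mem (show q ∈ Iio t ×ˢ univ from ⟨hqt, trivial⟩)]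
          simp only [G, circleMap_eq_add_polarCoord_symm]
        · rw [indicator_of_notMem (by rwa [mem_ball, dist_zero_right, hnorm]),
            indicator_of_notMem (show q ∉ Iio t ×ˢ univ from fun h ↦ hqt h.1), smul_zero]
    _ = ∫ r in Ioo 0 t, ∫ θ in Ioo (-π) π, G (r, θ) := by
        rw [setIntegral_indicator (measurableSet_Iio.prod MeasurableSet.univ), ← hpolar,
          Measure.volume_eq_prod, setIntegral_prod G hG]
    _ = ∫ r in 0..t, (2 * π * r) • circleAverage f c r := by
        simp only [G, integral_smul, setIntegral_Ioo_circleMap_eq_circleAverage, smul_smul]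
        rw [intervalIntegral.integral_of_le ht, integral_Ioc_eq_integral_Ioo]
        simp_rw [mul_comm _ (2 * π)]

theorem norm_circleAverage_le (f : ℂ → E) (c : ℂ) (R : ℝ) :
    ‖circleAverage f c R‖ ≤ circleAverage (‖f ·‖) c R := by
  simp only [circleAverage_def, norm_smul, smul_eq_mul, norm_inv, Real.norm_of_nonneg two_pi_pos.le]
  gcongr
  exact intervalIntegral.norm_integral_le_integral_norm two_pi_pos.le

end CircleAverage

theorem ContinuousOn.integrableOn_ball {X E : Type*} [MetricSpace X] [ProperSpace X]
    [MeasurableSpace X] [OpensMeasurableSpace X] [NormedAddCommGroup E] {μ : Measure X}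
    [IsFiniteMeasureOnCompacts μ] {f : X → E} {c : X} {t : ℝ}
    (hf : ContinuousOn f (closedBall c t)) : IntegrableOn f (ball c t) μ :=
  (hf.integrableOn_compact (isCompact_closedBall c t)).mono_set ball_subset_closedBall

theorem norm_le_two_rpow_mul_of_isMaxOn {X F : Type*} [MetricSpace X] [NormedAddCommGroup F]
    {g : X → F} {z ζ : X} {t e : ℝ} (he : 0 ≤ e) (hζ : dist ζ z < t)
    (hmax : IsMaxOn (fun w ↦ ‖g w‖ * (t - dist w z) ^ e) (closedBall z t) ζ) {w : X}
    (hw : w ∈ ball ζ ((t - dist ζ z) / 2)) : ‖g w‖ ≤ 2 ^ e * ‖g ζ‖ := by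
  set d := t - dist ζ z
  have hd : 0 < d := sub_pos.2 hζ
  have hwz : d / 2 ≤ t - dist w z := by
    linarith [dist_triangle w ζ z, mem_ball.1 hw]
  have hle : ‖g w‖ * (t - dist w z) ^ e ≤ ‖g ζ‖ * d ^ e :=
    hmax (mem_closedBall.2 (by linarith))
  have hpos : 0 < (d / 2) ^ e := by positivity
  refine le_of_mul_le_mul_right ?_ hpos
  calc ‖g w‖ * (d / 2) ^ e ≤ ‖g w‖ * (t - dist w z) ^ e := by gcongr
    _ ≤ ‖g ζ‖ * d ^ e := hle
    _ = 2 ^ e * ‖g ζ‖ * (d / 2) ^ e := by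
        rw [Real.div_rpow hd.le zero_le_two]
        field_simp

section MeanValue

variable {F : Type*} [NormedAddCommGroup F] [NormedSpace ℂ F] [CompleteSpace F]
  {g : ℂ → F} {c z : ℂ} {p t : ℝ}

theorem norm_le_circleAverage_norm {R : ℝ} (hR : 0 ≤ R)
    (hg : DifferentiableOn ℂ g (closedBall c R)) : ‖g c‖ ≤ circleAverage (‖g ·‖) c R := by
  have hmean := (hg.diffContOnCl_ball (by rw [abs_of_nonneg hR])).circleAverage
  exact hmean ▸ norm_circleAverage_le g c R

theorem pi_mul_sq_mul_norm_le_setIntegral_norm (ht : 0 ≤ t)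
    (hg : DifferentiableOn ℂ g (closedBall c t)) :
    π * t ^ 2 * ‖g c‖ ≤ ∫ w in ball c t, ‖g w‖ := by
  have hcont : ContinuousOn (circleAverage (‖g ·‖) c) (Icc 0 t) :=
    ContinuousOn.circleAverage
      (hg.continuousOn.norm.mono fun w hw ↦ by simpa [dist_eq_norm] using hw.2)
      fun r hr ↦ hr.1
  calc π * t ^ 2 * ‖g c‖ = ∫ r in 0..t, 2 * π * r * ‖g c‖ := by
        rw [intervalIntegral.integral_mul_const, intervalIntegral.integral_const_mul, integral_id]
        ring
    _ ≤ ∫ r in 0..t, (2 * π * r) • circleAverage (‖g ·‖) c r := by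
        refine intervalIntegral.integral_mono_on ht
          (Continuous.intervalIntegrable (by fun_prop) _ _) ?_ fun r hr ↦ ?_
        · exact ((continuousOn_const.mul continuousOn_id).smul hcont).intervalIntegrable_of_Icc ht
        · exact mul_le_mul_of_nonneg_left
            (norm_le_circleAverage_norm hr.1 (hg.mono (closedBall_subset_closedBall hr.2)))
            (by have := hr.1; positivity)
    _ = ∫ w in ball c t, ‖g w‖ :=
        (setIntegral_ball_eq_intervalIntegral_circleAverage ht hg.continuousOn.norm).symm

theorem pi_mul_sq_mul_norm_le_rpow_mul_setIntegral_rpow_norm {K : ℝ} (hp0 : 0 ≤ p) (hp1 : p ≤ 1)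
    (ht : 0 ≤ t) (hg : DifferentiableOn ℂ g (closedBall c t)) (hK : ∀ w ∈ ball c t, ‖g w‖ ≤ K) :
    π * t ^ 2 * ‖g c‖ ≤ K ^ (1 - p) * ∫ w in ball c t, ‖g w‖ ^ p := by
  have hcont : ContinuousOn (‖g ·‖ ^ p) (closedBall c t) :=
    hg.continuousOn.norm.rpow_const fun _ _ ↦ Or.inr hp0
  calc π * t ^ 2 * ‖g c‖ ≤ ∫ w in ball c t, ‖g w‖ := pi_mul_sq_mul_norm_le_setIntegral_norm ht hg
    _ ≤ ∫ w in ball c t, K ^ (1 - p) * ‖g w‖ ^ p := by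
        refine setIntegral_mono_on hg.continuousOn.norm.integrableOn_ball
          (continuousOn_const.mul hcont).integrableOn_ball measurableSet_ball fun w hw ↦ ?_
        calc ‖g w‖ = ‖g w‖ ^ (1 - p) * ‖g w‖ ^ p := by
              rw [← Real.rpow_add' (norm_nonneg _) (by norm_num), sub_add_cancel, Real.rpow_one]
          _ ≤ K ^ (1 - p) * ‖g w‖ ^ p := by
              gcongr
              exact hK w hw
    _ = K ^ (1 - p) * ∫ w in ball c t, ‖g w‖ ^ p := integral_const_mul _ _

theorem pi_mul_sq_mul_rpow_norm_le_of_isMaxOn {ζ : ℂ} (hp : 0 < p) (hp1 : p ≤ 1)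
    (hg : DifferentiableOn ℂ g (closedBall z t)) (hζ : dist ζ z < t)
    (hmax : IsMaxOn (fun w ↦ ‖g w‖ * (t - dist w z) ^ (2 / p)) (closedBall z t) ζ) :
    π * ((t - dist ζ z) / 2) ^ 2 * ‖g ζ‖ ^ p
      ≤ 2 ^ (2 / p * (1 - p)) * ∫ w in ball z t, ‖g w‖ ^ p := by
  rcases (norm_nonneg (g ζ)).eq_or_lt with hM | hM
  · rw [← hM, Real.zero_rpow hp.ne', mul_zero]
    exact mul_nonneg (by positivity) (setIntegral_nonneg measurableSet_ball fun _ _ ↦ by positivity)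
  set e := 2 / p
  set r := (t - dist ζ z) / 2 with hr_def
  set M := ‖g ζ‖
  set I := ∫ w in ball z t, ‖g w‖ ^ p
  have hsub : closedBall ζ r ⊆ ball z t := fun w hw ↦ by
    rw [mem_ball]
    linarith [dist_triangle w ζ z, mem_closedBall.1 hw, hr_def]
  have hlocal : π * r ^ 2 * M ≤ (2 ^ e * M) ^ (1 - p) * I :=
    calc π * r ^ 2 * M ≤ (2 ^ e * M) ^ (1 - p) * ∫ w in ball ζ r, ‖g w‖ ^ p :=
          pi_mul_sq_mul_norm_le_rpow_mul_setIntegral_rpow_norm hp.le hp1 (by linarith [hr_def])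
            (hg.mono (hsub.trans ball_subset_closedBall))
            fun w hw ↦ norm_le_two_rpow_mul_of_isMaxOn (by positivity) hζ hmax hw
      _ ≤ (2 ^ e * M) ^ (1 - p) * I := by
          gcongr
          exact setIntegral_mono_set
            (hg.continuousOn.norm.rpow_const fun _ _ ↦ Or.inr hp.le).integrableOn_ball
            (.of_forall fun _ ↦ by positivity)
            (ball_subset_closedBall.trans hsub).eventuallyLE
  refine le_of_mul_le_mul_right ?_ (Real.rpow_pos_of_pos hM (1 - p))
  calc π * r ^ 2 * M ^ p * M ^ (1 - p) = π * r ^ 2 * M := by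
        rw [mul_assoc, ← Real.rpow_add hM, add_sub_cancel, Real.rpow_one]
    _ ≤ (2 ^ e * M) ^ (1 - p) * I := hlocal
    _ = 2 ^ (e * (1 - p)) * I * M ^ (1 - p) := by
        rw [Real.mul_rpow (by positivity) hM.le, ← Real.rpow_mul zero_le_two]
        ring

theorem rpow_norm_le_mul_setIntegral_rpow_norm_of_le_one (hp : 0 < p) (hp1 : p ≤ 1) (ht : 0 < t)
    (hg : DifferentiableOn ℂ g (closedBall z t)) :
    ‖g z‖ ^ p ≤ 4 * 2 ^ (2 / p * (1 - p)) / (π * t ^ 2) * ∫ w in ball z t, ‖g w‖ ^ p := by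
  set e := 2 / p
  rcases (norm_nonneg (g z)).eq_or_lt with hz | hz
  · rw [← hz, Real.zero_rpow hp.ne']
    exact mul_nonneg (by positivity) (setIntegral_nonneg measurableSet_ball fun _ _ ↦ by positivity)
  have hφ : ContinuousOn (fun w ↦ ‖g w‖ * (t - dist w z) ^ e) (closedBall z t) :=
    hg.continuousOn.norm.mul
      ((continuousOn_const.sub (continuous_id.dist continuous_const).continuousOn).rpow_const
        fun _ _ ↦ Or.inr (by positivity))
  obtain ⟨ζ, hζ, hmax⟩ :=
    (isCompact_closedBall z t).exists_isMaxOn (nonempty_closedBall.2 ht.le) hφ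
  set d := t - dist ζ z
  have hzζ : ‖g z‖ * t ^ e ≤ ‖g ζ‖ * d ^ e := by simpa using hmax (mem_closedBall_self ht.le)
  have hd : 0 < d := by
    refine (sub_nonneg.2 (mem_closedBall.1 hζ)).lt_of_ne fun h ↦ ?_
    rw [show d = 0 from h.symm, Real.zero_rpow (by positivity), mul_zero] at hzζ
    exact (by positivity : 0 < ‖g z‖ * t ^ e).not_ge hzζ
  have hpow : ‖g z‖ ^ p * t ^ 2 ≤ ‖g ζ‖ ^ p * d ^ 2 := by
    have h := Real.rpow_le_rpow (by positivity) hzζ hp.le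
    rwa [Real.mul_rpow (norm_nonneg _) (by positivity),
      Real.mul_rpow (norm_nonneg _) (by positivity), ← Real.rpow_mul ht.le,
      ← Real.rpow_mul hd.le, div_mul_cancel₀ 2 hp.ne', Real.rpow_two, Real.rpow_two] at h
  rw [div_mul_eq_mul_div, le_div_iff₀ (by positivity)]
  calc ‖g z‖ ^ p * (π * t ^ 2) = π * (‖g z‖ ^ p * t ^ 2) := by ring
    _ ≤ π * (‖g ζ‖ ^ p * d ^ 2) := by gcongr
    _ = 4 * (π * (d / 2) ^ 2 * ‖g ζ‖ ^ p) := by ring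
    _ ≤ 4 * (2 ^ (e * (1 - p)) * ∫ w in ball z t, ‖g w‖ ^ p) := mul_le_mul_of_nonneg_left
        (pi_mul_sq_mul_rpow_norm_le_of_isMaxOn hp hp1 hg (sub_pos.1 hd) hmax) zero_le_four
    _ = 4 * 2 ^ (e * (1 - p)) * ∫ w in ball z t, ‖g w‖ ^ p := by ring

end MeanValue

theorem exists_rpow_norm_le_mul_setIntegral_rpow_norm {p t : ℝ} (hp : 0 < p) (ht : 0 < t) :
    ∃ C : ℝ, 0 < C ∧ ∀ (g : ℂ → ℂ) (z : ℂ), DifferentiableOn ℂ g (closedBall z t) →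
      ‖g z‖ ^ p ≤ C * ∫ w in ball z t, ‖g w‖ ^ p := by
  set n := ⌈p⌉₊
  have hn : 0 < (n : ℝ) := Nat.cast_pos.2 (Nat.ceil_pos.2 hp)
  set q := p / n
  have hq : 0 < q := by positivity
  have hq1 : q ≤ 1 := div_le_one_of_le₀ (Nat.le_ceil p) hn.le
  refine ⟨4 * 2 ^ (2 / q * (1 - q)) / (π * t ^ 2), by positivity, fun g z hg ↦ ?_⟩
  have hpow (w : ℂ) : ‖g w ^ n‖ ^ q = ‖g w‖ ^ p := by
    rw [norm_pow, ← Real.rpow_natCast, ← Real.rpow_mul (norm_nonneg _), mul_div_cancel₀ _ hn.ne']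
  simpa only [Pi.pow_apply, hpow] using
    rpow_norm_le_mul_setIntegral_rpow_norm_of_le_one hq hq1 ht (hg.pow n)

theorem norm_mul_cexp_neg_conj_mul_mul_exp (a z w : ℂ) (lam : ℝ) :
    ‖a * Complex.exp (-lam * (starRingEnd ℂ) z * w)‖ * rexp (lam / 2 * ‖z‖ ^ 2)
      = ‖a‖ * rexp (-(lam / 2) * ‖w‖ ^ 2) * rexp (lam / 2 * ‖w - z‖ ^ 2) := by
  rw [norm_mul, Complex.norm_exp, mul_assoc, mul_assoc ‖a‖, ← Real.exp_add, ← Real.exp_add]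
  congr 2
  simp only [Complex.sq_norm, Complex.normSq_apply, Complex.mul_re, Complex.mul_im,
    Complex.neg_re, Complex.neg_im, Complex.ofReal_re, Complex.ofReal_im, Complex.conj_re,
    Complex.conj_im, Complex.sub_re, Complex.sub_im]
  ring

theorem setIntegral_rpow_norm_mul_cexp_neg_conj_mul_le {f : ℂ → ℂ} (hf : Continuous f)
    {p lam t : ℝ} (hp : 0 ≤ p) (hlam : 0 ≤ lam) (z : ℂ) :
    ∫ w in ball z t,
        (‖f w * Complex.exp (-lam * (starRingEnd ℂ) z * w)‖ * rexp (lam / 2 * ‖z‖ ^ 2)) ^ p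
      ≤ rexp (lam / 2 * t ^ 2) ^ p
          * ∫ w in ball z t, (‖f w‖ * rexp (-(lam / 2) * ‖w‖ ^ 2)) ^ p := by
  rw [← integral_const_mul]
  refine setIntegral_mono_on ?_ ?_ measurableSet_ball fun w hw ↦ ?_
  · exact (((hf.mul (by fun_prop)).norm.mul continuous_const).rpow_const
      fun _ ↦ Or.inr hp).continuousOn.integrableOn_ball
  · exact (continuous_const.mul ((hf.norm.mul (by fun_prop)).rpow_const
      fun _ ↦ Or.inr hp)).continuousOn.integrableOn_ball
  rw [norm_mul_cexp_neg_conj_mul_mul_exp, ← Real.mul_rpow (by positivity) (by positivity),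
    mul_comm (‖f w‖ * _)]
  gcongr
  exact (mem_ball_iff_norm.1 hw).le

/-- pointwise estimate for entire functions: for `p, λ, t > 0` there is
`C > 0` (depending only on `p, λ, t`) such that
`|f(z) e^{-(λ/2)|z|²}|^p ≤ C ∫_{B(z,t)} |f(w) e^{-(λ/2)|w|²}|^p dA(w)` for all entire `f`
and all `z ∈ ℂ`. -/
theorem pointwise_estimate_entire (p lam t : ℝ) (hp : 0 < p) (hlam : 0 < lam) (ht : 0 < t) :
    ∃ C : ℝ, 0 < C ∧ ∀ f : ℂ → ℂ, Differentiable ℂ f → ∀ z : ℂ,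
      (‖f z‖ * Real.exp (-(lam / 2) * ‖z‖ ^ 2)) ^ p
        ≤ C * ∫ w in Metric.ball z t, (‖f w‖ * Real.exp (-(lam / 2) * ‖w‖ ^ 2)) ^ p := by
  obtain ⟨C, hC, hmean⟩ := exists_rpow_norm_le_mul_setIntegral_rpow_norm hp ht
  refine ⟨C * rexp (lam / 2 * t ^ 2) ^ p, by positivity, fun f hf z ↦ ?_⟩
  set h : ℂ → ℂ := fun w ↦ f w * Complex.exp (-lam * (starRingEnd ℂ) z * w)
  set E := rexp (lam / 2 * ‖z‖ ^ 2)
  have hz : ‖f z‖ * rexp (-(lam / 2) * ‖z‖ ^ 2) = ‖h z‖ * E := by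
    rw [norm_mul_cexp_neg_conj_mul_mul_exp, sub_self, norm_zero]
    simp
  have hsplit (w : ℂ) : (‖h w‖ * E) ^ p = ‖h w‖ ^ p * E ^ p :=
    Real.mul_rpow (norm_nonneg _) (by positivity)
  calc (‖f z‖ * rexp (-(lam / 2) * ‖z‖ ^ 2)) ^ p = ‖h z‖ ^ p * E ^ p := by rw [hz, hsplit]
    _ ≤ (C * ∫ w in ball z t, ‖h w‖ ^ p) * E ^ p := by
        gcongr
        exact hmean h z (hf.mul (by fun_prop)).differentiableOn
    _ = C * ∫ w in ball z t, (‖h w‖ * E) ^ p := by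
        simp_rw [hsplit, integral_mul_const, mul_assoc]
    _ ≤ C * (rexp (lam / 2 * t ^ 2) ^ p
          * ∫ w in ball z t, (‖f w‖ * rexp (-(lam / 2) * ‖w‖ ^ 2)) ^ p) := by
        gcongr
        exact setIntegral_rpow_norm_mul_cexp_neg_conj_mul_le hf.continuous hp.le hlam.le z
    _ = _ := (mul_assoc _ _ _).symm
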